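/- Let NN be a K-way, L-layer fully-connected network (L ≥ 2) with weight matrices w_1,…,w_L, bias vectors b_1,…,b_L, and a componentwise activation f : ℝ → ℝ that is Lipschitz with constant C ≥ 0, whose softmax output is NN(x)_k = exp(θ_k(x)) / Σ_{p=1}^K exp(θ_p(x)), where θ(x) = w_L h_{L−1}(x) + b_L and h_0(x) = x, h_i(x) = f∘(w_i h_{i−1}(x) + b_i) for 1 ≤ i ≤ L−1. Let ξ be a perturbation vector and set η = max_{k=1,…,K} [ C^{L−1} (|w_L|·|w_{L−1}|⋯|w_1|·|ξ|)_k + (b_L)_k ], where |·| denotes entrywise absolute value. If every entry of b_L is nonnegative, then for every k, the output variation satisfies |NN(x)_k − NN(x+ξ)_k| ≤ exp(θ_k(x)) · (e^η − e^{−η}) / Σ_{p=1}^K exp(θ_p(x+ξ)). -/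

import Mathlib

/-!
By induction over the layers, `|h_i(x) - h_i(x+ξ)| ≤ C^i |w_i|⋯|w_1| |ξ|` entrywise: the affine
map `w_{i+1}` spreads the perturbation by at most `|w_{i+1}|`, and `f` enlarges it by at most `C`.
Hence every logit moves by at most `η`, which rescales every exponential, and so the softmax
normaliser, by a factor in `[e^{-η}, e^η]`. Both `NN(x)_k` and `NN(x+ξ)_k` then lie in the interval
`exp(θ_k(x)) · [e^{-η}, e^η] / ∑_p exp(θ_p(x+ξ))`.
-/

/-- Hidden states of a fully-connected network: `hiddenState dims w b f i x` is `h_i(x)`,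
with `h_0(x) = x` and `h_{i+1}(x) = f ∘ (w_{i+1} h_i(x) + b_{i+1})` (the paper's `w_{i+1}`
is `w i` here, i.e. the paper's 1-indexed `w_i` is the 0-indexed `w (i-1)`). -/
def hiddenState (dims : ℕ → ℕ)
    (w : (i : ℕ) → Matrix (Fin (dims (i + 1))) (Fin (dims i)) ℝ)
    (b : (i : ℕ) → Fin (dims (i + 1)) → ℝ) (f : ℝ → ℝ) :
    (i : ℕ) → (Fin (dims 0) → ℝ) → (Fin (dims i) → ℝ)
  | 0, x => x
  | i + 1, x => fun j => f ((w i).mulVec (hiddenState dims w b f i x) j + b i j)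

/-- `absChain dims w ξ i = |w_i|·|w_{i-1}|⋯|w_1|·|ξ|` (entrywise absolute values),
a vector of size `dims i`; the base case is `|ξ|`. -/
def absChain (dims : ℕ → ℕ)
    (w : (i : ℕ) → Matrix (Fin (dims (i + 1))) (Fin (dims i)) ℝ)
    (ξ : Fin (dims 0) → ℝ) :
    (i : ℕ) → (Fin (dims i) → ℝ)
  | 0 => fun j => |ξ j|
  | i + 1 => ((w i).map (fun a => |a|)).mulVec (absChain dims w ξ i)

open Finset Real
open scoped Matrix

section Softmax

variable {ι : Type*} [Fintype ι]

theorem sum_exp_le_exp_mul_sum_exp {θ θ' : ι → ℝ} {η : ℝ} (h : ∀ p, θ' p ≤ θ p + η) :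
    ∑ p, exp (θ' p) ≤ exp η * ∑ p, exp (θ p) := by
  rw [mul_sum]
  gcongr with p
  rw [← exp_add, add_comm]
  exact exp_le_exp.mpr (h p)

theorem abs_softmax_sub_le {θ θ' : ι → ℝ} {η : ℝ} (h : ∀ p, |θ p - θ' p| ≤ η) (k : ι) :
    |exp (θ k) / ∑ p, exp (θ p) - exp (θ' k) / ∑ p, exp (θ' p)| ≤
      exp (θ k) * (exp η - exp (-η)) / ∑ p, exp (θ' p) := by
  have hle : ∀ p, θ' p ≤ θ p + η := fun p => by linarith [(abs_le.mp (h p)).1]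
  have hge : ∀ p, θ p ≤ θ' p + η := fun p => by linarith [(abs_le.mp (h p)).2]
  set S := ∑ p, exp (θ p)
  set S' := ∑ p, exp (θ' p)
  have hS : 0 < S := sum_pos (fun p _ => exp_pos _) ⟨k, mem_univ k⟩
  have hS' : 0 < S' := sum_pos (fun p _ => exp_pos _) ⟨k, mem_univ k⟩
  have hS'S : S' ≤ exp η * S := sum_exp_le_exp_mul_sum_exp hle
  have hSS' : exp (-η) * S ≤ S' := by
    calc exp (-η) * S ≤ exp (-η) * (exp η * S') :=
          mul_le_mul_of_nonneg_left (sum_exp_le_exp_mul_sum_exp hge) (exp_pos _).le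
      _ = S' := by rw [← mul_assoc, ← exp_add, neg_add_cancel, exp_zero, one_mul]
  have hk_lower : exp (θ k) * exp (-η) ≤ exp (θ' k) := by
    rw [← exp_add]; exact exp_le_exp.mpr (by linarith [hge k])
  have hk_upper : exp (θ' k) ≤ exp (θ k) * exp η := by
    rw [← exp_add]; exact exp_le_exp.mpr (hle k)
  have ha := (exp_pos (θ k)).le
  rw [show exp (θ k) * (exp η - exp (-η)) / S' =
      exp (θ k) * exp η / S' - exp (θ k) * exp (-η) / S' by ring]
  apply abs_sub_le_of_le_of_le
  · rw [div_le_div_iff₀ hS' hS, mul_assoc]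
    exact mul_le_mul_of_nonneg_left hSS' ha
  · rw [div_le_div_iff₀ hS hS', mul_assoc]
    exact mul_le_mul_of_nonneg_left hS'S ha
  · gcongr
  · gcongr

end Softmax

theorem abs_mulVec_sub_mulVec_le {m n : Type*} [Fintype n] (W : Matrix m n ℝ) {u v d : n → ℝ}
    (h : ∀ q, |u q - v q| ≤ d q) (j : m) :
    |(W *ᵥ u) j - (W *ᵥ v) j| ≤ (W.map (fun a => |a|) *ᵥ d) j := by
  simp only [Matrix.mulVec, dotProduct, Matrix.map_apply, ← sum_sub_distrib, ← mul_sub]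
  refine (abs_sum_le_sum_abs _ _).trans (sum_le_sum fun q _ => ?_)
  rw [abs_mul]
  exact mul_le_mul_of_nonneg_left (h q) (abs_nonneg _)

theorem abs_mulVec_sub_mulVec_le_absChain_succ (dims : ℕ → ℕ)
    (w : (i : ℕ) → Matrix (Fin (dims (i + 1))) (Fin (dims i)) ℝ) (ξ : Fin (dims 0) → ℝ)
    {C : ℝ} {i : ℕ} {u v : Fin (dims i) → ℝ} (h : ∀ q, |u q - v q| ≤ C ^ i * absChain dims w ξ i q)
    (j : Fin (dims (i + 1))) :
    |(w i *ᵥ u) j - (w i *ᵥ v) j| ≤ C ^ i * absChain dims w ξ (i + 1) j := by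
  simpa only [Matrix.mulVec_smul, ← absChain.eq_2, Pi.smul_apply, smul_eq_mul] using
    abs_mulVec_sub_mulVec_le (w i) (d := C ^ i • absChain dims w ξ i) h j

theorem abs_hiddenState_sub_le (dims : ℕ → ℕ)
    (w : (i : ℕ) → Matrix (Fin (dims (i + 1))) (Fin (dims i)) ℝ)
    (b : (i : ℕ) → Fin (dims (i + 1)) → ℝ) {f : ℝ → ℝ} {C : ℝ} (hC : 0 ≤ C)
    (hf : ∀ s t : ℝ, |f s - f t| ≤ C * |s - t|) (x ξ : Fin (dims 0) → ℝ) :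
    ∀ i j, |hiddenState dims w b f i x j - hiddenState dims w b f i (x + ξ) j| ≤
      C ^ i * absChain dims w ξ i j
  | 0, j => by simp [hiddenState, absChain]
  | i + 1, j => by
    have hprev := abs_mulVec_sub_mulVec_le_absChain_succ dims w ξ
      (abs_hiddenState_sub_le dims w b hC hf x ξ i) j
    calc _ ≤ C * |(w i *ᵥ hiddenState dims w b f i x) j -
            (w i *ᵥ hiddenState dims w b f i (x + ξ)) j| := by
          simpa only [hiddenState, add_sub_add_right_eq_sub] using hf (_ + b i j) (_ + b i j)
      _ ≤ C * (C ^ i * absChain dims w ξ (i + 1) j) := mul_le_mul_of_nonneg_left hprev hC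
      _ = C ^ (i + 1) * absChain dims w ξ (i + 1) j := by ring

theorem softmax_output_variation_bound_with_bias_general (L : ℕ) (dims : ℕ → ℕ)
    (hK : 0 < dims (L - 1 + 1))
    (w : (i : ℕ) → Matrix (Fin (dims (i + 1))) (Fin (dims i)) ℝ)
    (b : (i : ℕ) → Fin (dims (i + 1)) → ℝ)
    (f : ℝ → ℝ) (C : ℝ) (hC : 0 ≤ C)
    (hf : ∀ s t : ℝ, |f s - f t| ≤ C * |s - t|)
    (hb : ∀ k : Fin (dims (L - 1 + 1)), 0 ≤ b (L - 1) k)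
    (θ : (Fin (dims 0) → ℝ) → Fin (dims (L - 1 + 1)) → ℝ)
    (hθ : ∀ y k, θ y k =
      (w (L - 1)).mulVec (hiddenState dims w b f (L - 1) y) k + b (L - 1) k)
    (NN : (Fin (dims 0) → ℝ) → Fin (dims (L - 1 + 1)) → ℝ)
    (hNN : ∀ y k, NN y k = Real.exp (θ y k) / ∑ p, Real.exp (θ y p))
    (x ξ : Fin (dims 0) → ℝ) (η : ℝ)
    (hη : η = Finset.univ.sup'
        (Finset.univ_nonempty_iff.mpr (Fin.pos_iff_nonempty.mp hK))
        (fun k => C ^ (L - 1) * absChain dims w ξ (L - 1 + 1) k + b (L - 1) k)) :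
    ∀ k : Fin (dims (L - 1 + 1)),
      |NN x k - NN (x + ξ) k| ≤
        Real.exp (θ x k) * (Real.exp η - Real.exp (-η)) /
          ∑ p, Real.exp (θ (x + ξ) p) := by
  have hlogits : ∀ p, |θ x p - θ (x + ξ) p| ≤ η := by
    intro p
    have hmul := abs_mulVec_sub_mulVec_le_absChain_succ dims w ξ
      (abs_hiddenState_sub_le dims w b hC hf x ξ (L - 1)) p
    have hmax : C ^ (L - 1) * absChain dims w ξ (L - 1 + 1) p + b (L - 1) p ≤ η :=
      hη ▸ le_sup' (fun q => C ^ (L - 1) * absChain dims w ξ (L - 1 + 1) q + b (L - 1) q)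
        (mem_univ p)
    rw [hθ, hθ, add_sub_add_right_eq_sub]
    linarith [hb p]
  intro k
  simpa only [hNN] using abs_softmax_sub_le hlogits k

/-- **Theorem 1 of the paper, with bias term.** For a `K`-way, `L`-layer
fully-connected network (`L ≥ 2`, `K = dims (L-1+1) = dims L ≥ 1`) with activation `f`
Lipschitz with constant `C ≥ 0`, logits `θ(x) = w_L h_{L-1}(x) + b_L`, softmax output
`NN(x)_k = exp(θ_k(x)) / ∑_p exp(θ_p(x))`, perturbation `ξ`, and
`η = max_k [C^{L-1}·(|w_L|·|w_{L-1}|⋯|w_1|·|ξ|)_k + (b_L)_k]`: if all entries of `b_L`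
are nonnegative, then for every `k`,
`|NN(x)_k − NN(x+ξ)_k| ≤ exp(θ_k(x))·(e^η − e^{−η}) / ∑_p exp(θ_p(x+ξ))`. -/
theorem softmax_output_variation_bound_with_bias (L : ℕ) (hL : 2 ≤ L) (dims : ℕ → ℕ)
    (hK : 0 < dims (L - 1 + 1))
    (w : (i : ℕ) → Matrix (Fin (dims (i + 1))) (Fin (dims i)) ℝ)
    (b : (i : ℕ) → Fin (dims (i + 1)) → ℝ)
    (f : ℝ → ℝ) (C : ℝ) (hC : 0 ≤ C)
    (hf : ∀ s t : ℝ, |f s - f t| ≤ C * |s - t|)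
    (hb : ∀ k : Fin (dims (L - 1 + 1)), 0 ≤ b (L - 1) k)
    (θ : (Fin (dims 0) → ℝ) → Fin (dims (L - 1 + 1)) → ℝ)
    (hθ : ∀ y k, θ y k =
      (w (L - 1)).mulVec (hiddenState dims w b f (L - 1) y) k + b (L - 1) k)
    (NN : (Fin (dims 0) → ℝ) → Fin (dims (L - 1 + 1)) → ℝ)
    (hNN : ∀ y k, NN y k = Real.exp (θ y k) / ∑ p, Real.exp (θ y p))
    (x ξ : Fin (dims 0) → ℝ) (η : ℝ)
    (hη : η = Finset.univ.sup'
        (Finset.univ_nonempty_iff.mpr (Fin.pos_iff_nonempty.mp hK))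
        (fun k => C ^ (L - 1) * absChain dims w ξ (L - 1 + 1) k + b (L - 1) k)) :
    ∀ k : Fin (dims (L - 1 + 1)),
      |NN x k - NN (x + ξ) k| ≤
        Real.exp (θ x k) * (Real.exp η - Real.exp (-η)) /
          ∑ p, Real.exp (θ (x + ξ) p) :=
  softmax_output_variation_bound_with_bias_general L dims hK w b f C hC hf hb θ hθ NN hNN x ξ η hη
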